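/- arXiv:2403.11149 — 9 statements merged into one kernel-verified Lean document; each statement's English description precedes it below -/
import Mathlib

section
/- Let p be a prime and let A and B be commutative rings of characteristic p which are perfect, i.e. on each of them the Frobenius endomorphism x ↦ x^p is bijective. Then every A-algebra structure on B is formally étale: for every commutative A-algebra R and every ideal I ⊆ R with I² = 0, each A-algebra homomorphism B → R/I lifts uniquely to an A-algebra homomorphism B → R. -/
/-!
Let `C` be a ring of characteristic `p` and `I ⊆ C` an ideal with `I ^ 2 = 0`. Since `p ≥ 2`,
Frobenius kills `I`, so it factors through a ring map `Φ : C ⧸ I → C`, `Φ (x mod I) = x ^ p`.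
If `B` is perfect, a homomorphism `f : B → C ⧸ I` then has the lift `Φ ∘ f ∘ Frob⁻¹`, and it is
the only one: any lift `g` satisfies `g = Frob ∘ g ∘ Frob⁻¹ = Φ ∘ f ∘ Frob⁻¹`. Perfectness of `A`
makes the lift `A`-linear.
-/

universe u

namespace Ideal

variable {C : Type*} [CommRing C] {I : Ideal C} (p : ℕ) [Fact p.Prime] [CharP C p] (hI : I ^ 2 = ⊥)

def quotientFrobenius : C ⧸ I →+* C :=
  Quotient.lift I (frobenius C p) fun _ hx ↦
    pow_eq_zero_of_mem hI (Fact.out : p.Prime).two_le hx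

@[simp]
theorem quotientFrobenius_mk (x : C) : quotientFrobenius p hI (Quotient.mk I x) = x ^ p :=
  rfl

@[simp]
theorem mk_quotientFrobenius (y : C ⧸ I) : Quotient.mk I (quotientFrobenius p hI y) = y ^ p := by
  obtain ⟨x, rfl⟩ := Quotient.mk_surjective y
  rw [quotientFrobenius_mk, map_pow]

end Ideal

namespace AlgHom

variable {A B C : Type*} [CommRing A] [CommRing B] [CommRing C] [Algebra A B] [Algebra A C]
  (p : ℕ) [Fact p.Prime] [CharP A p] [PerfectRing A p] [CharP B p] [PerfectRing B p] [CharP C p]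
  {I : Ideal C} (hI : I ^ 2 = ⊥)

noncomputable def liftOfPerfect (f : B →ₐ[A] C ⧸ I) : B →ₐ[A] C where
  toRingHom := (I.quotientFrobenius p hI).comp <|
    f.toRingHom.comp (frobeniusEquiv B p).symm.toRingHom
  commutes' a := by
    obtain ⟨a', rfl⟩ := surjective_frobenius A p a
    change I.quotientFrobenius p hI (f ((frobeniusEquiv B p).symm (algebraMap A B (a' ^ p)))) =
      algebraMap A C (a' ^ p)
    rw [map_pow, frobeniusEquiv_symm_pow, f.commutes, ← Ideal.Quotient.mk_algebraMap,
      Ideal.quotientFrobenius_mk, map_pow]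

theorem liftOfPerfect_apply (f : B →ₐ[A] C ⧸ I) (b : B) :
    liftOfPerfect p hI f b = I.quotientFrobenius p hI (f ((frobeniusEquiv B p).symm b)) :=
  rfl

theorem mkₐ_comp_liftOfPerfect (f : B →ₐ[A] C ⧸ I) :
    (Ideal.Quotient.mkₐ A I).comp (liftOfPerfect p hI f) = f := by
  ext b
  rw [comp_apply, Ideal.Quotient.mkₐ_eq_mk, liftOfPerfect_apply, Ideal.mk_quotientFrobenius,
    ← map_pow, frobeniusEquiv_symm_pow_p]

theorem liftOfPerfect_mkₐ_comp (g : B →ₐ[A] C) :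
    liftOfPerfect p hI ((Ideal.Quotient.mkₐ A I).comp g) = g := by
  ext b
  rw [liftOfPerfect_apply, comp_apply, Ideal.Quotient.mkₐ_eq_mk, Ideal.quotientFrobenius_mk,
    ← map_pow, frobeniusEquiv_symm_pow_p]

end AlgHom

/-- If `A` and `B` are perfect commutative rings of prime characteristic `p`,
then every `A`-algebra structure on `B` is formally étale: every `A`-algebra homomorphism
`B → R/I` with `I ^ 2 = 0` lifts uniquely to an `A`-algebra homomorphism `B → R`. -/
theorem perfect_to_perfect_formallyEtale (p : ℕ) [Fact p.Prime]
    (A B : Type u) [CommRing A] [CommRing B] [CharP A p] [CharP B p]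
    [PerfectRing A p] [PerfectRing B p] [Algebra A B] :
    Algebra.FormallyEtale A B := by
  rw [Algebra.FormallyEtale.iff_comp_bijective]
  intro C _ _ I hI
  rcases subsingleton_or_nontrivial C with _ | _
  · have : Subsingleton (C ⧸ I) := Ideal.Quotient.mk_surjective.subsingleton
    exact ⟨fun _ _ _ ↦ Subsingleton.elim _ _, fun _ ↦ ⟨default, Subsingleton.elim _ _⟩⟩
  have : CharP C p := (CharP.charP_iff_prime_eq_zero Fact.out).2 <| by
    rw [← map_natCast (algebraMap A C), CharP.cast_eq_zero, map_zero]
  exact Function.bijective_iff_has_inverse.2 ⟨AlgHom.liftOfPerfect p hI,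
    AlgHom.liftOfPerfect_mkₐ_comp p hI, AlgHom.mkₐ_comp_liftOfPerfect p hI⟩
end

section
/- Let p be a prime, A a commutative ring of characteristic p which is perfect (Frobenius bijective), and B an étale A-algebra, i.e. B is formally étale and of finite presentation over A. Then B is perfect: the Frobenius endomorphism x ↦ x^p of B is bijective. -/
/-!
Let `C ⊆ B` be the image of Frobenius. Since `A` is perfect, `A → B` factors through `C`, so `B`
is unramified and of finite type over `C`, and integral because `b ^ p ∈ C`. Over a residue field
`κ` of `C`, the fibre `F` is reduced (unramified over a field) and every `x ^ p` lies in `κ`, so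
`F` is a field, purely inseparable and (being unramified) separable over `κ`, hence `F = κ`;
Nakayama then gives `C = B`.

Injectivity: Frobenius of `B` is `A`-linear once its target is made an `A`-algebra through the
Frobenius of `A`, which keeps it étale. A surjection from an unramified algebra onto a smooth one
with finitely generated nil kernel has a section by smoothness, which is a left inverse by
unramifiedness.
-/

open Algebra

theorem Submodule.eq_top_of_forall_isMaximal_le_sup_smul {R M : Type*} [CommRing R]
    [AddCommGroup M] [Module R M] [Module.Finite R M] (N : Submodule R M)
    (h : ∀ m : Ideal R, m.IsMaximal → ⊤ ≤ N ⊔ m • ⊤) : N = ⊤ := by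
  have hcolon : N.colon (⊤ : Set M) = ⊤ := by
    by_contra hne
    obtain ⟨m, hm, hle⟩ := Ideal.exists_le_maximal _ hne
    obtain ⟨r, hr1, hr⟩ :=
      exists_sub_one_mem_and_smul_le_of_fg_of_le_sup Module.Finite.fg_top le_rfl (h m hm)
    have hrm : r ∈ m := hle (mem_colon.mpr fun x _ => hr (smul_mem_pointwise_smul x r ⊤ trivial))
    exact hm.ne_top ((Ideal.eq_top_iff_one m).mpr (by simpa using m.sub_mem hrm hr1))
  exact eq_top_iff.mpr fun x _ => by
    simpa using mem_colon.mp (hcolon ▸ Submodule.mem_top : (1 : R) ∈ N.colon (⊤ : Set M)) x trivial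

theorem Algebra.FormallyUnramified.surjective_algebraMap_of_field_of_pow_mem
    {K L : Type*} [Field K] [CommRing L] [Algebra K L] [FormallyUnramified K L]
    [EssFiniteType K L] (p : ℕ) [ExpChar K p]
    (h : ∀ x : L, x ^ p ∈ (algebraMap K L).range) : Function.Surjective (algebraMap K L) := by
  cases subsingleton_or_nontrivial L
  · exact fun x => ⟨0, Subsingleton.elim _ _⟩
  have : IsReduced L := isReduced_of_field K L
  have hfield : IsField L := by
    refine ⟨exists_pair_ne L, mul_comm, fun {x} hx => ?_⟩
    obtain ⟨c, hc⟩ := h x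
    have hc0 : c ≠ 0 := by
      rintro rfl
      exact hx (IsNilpotent.eq_zero ⟨p, by simpa using hc.symm⟩)
    have hunit : IsUnit (x ^ p) := hc ▸ (Ne.isUnit hc0).map (algebraMap K L)
    exact ((isUnit_pow_iff (expChar_ne_zero K p)).mp hunit).exists_right_inv
  let := hfield.toField
  have : IsPurelyInseparable K L :=
    (isPurelyInseparable_iff_pow_mem K p).mpr fun x => ⟨1, by simpa using h x⟩
  exact fun x => (range_eq_top_of_isPurelyInseparable K L).ge (Subring.mem_top x)

theorem Algebra.FormallyUnramified.surjective_algebraMap_of_pow_mem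
    {R S : Type*} [CommRing R] [CommRing S] [Algebra R S] [FormallyUnramified R S]
    [Algebra.FiniteType R S] (p : ℕ) [Fact p.Prime] [CharP R p]
    (h : ∀ x : S, x ^ p ∈ (algebraMap R S).range) : Function.Surjective (algebraMap R S) := by
  have : Algebra.IsIntegral R S := ⟨fun x => by
    obtain ⟨r, hr⟩ := h x
    exact IsIntegral.of_pow (Fact.out : p.Prime).pos (hr ▸ isIntegral_algebraMap)⟩
  have : Module.Finite R S := Algebra.IsIntegral.finite
  rw [← Algebra.coe_linearMap, ← LinearMap.range_eq_top]
  refine Submodule.eq_top_of_forall_isMaximal_le_sup_smul _ fun m hm x _ => ?_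
  let := Ideal.Quotient.field m
  have : CharP (R ⧸ m) p := (CharP.charP_iff_prime_eq_zero Fact.out).mpr <| by
    rw [← map_natCast (Ideal.Quotient.mk m), CharP.cast_eq_zero, map_zero]
  have : FormallyUnramified (R ⧸ m) (S ⧸ m.map (algebraMap R S)) := .of_restrictScalars R _ _
  have : EssFiniteType (R ⧸ m) (S ⧸ m.map (algebraMap R S)) := .of_comp R _ _
  obtain ⟨c, hc⟩ := surjective_algebraMap_of_field_of_pow_mem (K := R ⧸ m)
    (L := S ⧸ m.map (algebraMap R S)) p (fun y => by
      obtain ⟨y, rfl⟩ := Ideal.Quotient.mk_surjective y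
      obtain ⟨r, hr⟩ := h y
      exact ⟨Ideal.Quotient.mk m r, by simp [hr]⟩) (Ideal.Quotient.mk _ x)
  obtain ⟨r, rfl⟩ := Ideal.Quotient.mk_surjective c
  rw [Ideal.Quotient.algebraMap_quotient_map_quotient, eq_comm, Ideal.Quotient.eq] at hc
  rw [Ideal.smul_top_eq_map]
  exact Submodule.mem_sup.mpr ⟨_, ⟨r, rfl⟩, _, hc, add_sub_cancel _ _⟩

theorem frobenius_surjective_of_formallyUnramified (p : ℕ) [Fact p.Prime] (A B : Type*)
    [CommRing A] [CommRing B] [CharP A p] [CharP B p] [PerfectRing A p] [Algebra A B]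
    [FormallyUnramified A B] [Algebra.FiniteType A B] : Function.Surjective (frobenius B p) := by
  let C : Subalgebra A B :=
    { (frobenius B p).range with
      algebraMap_mem' a := ⟨algebraMap A B ((frobeniusEquiv A p).symm a), by
        rw [← RingHom.map_frobenius, ← coe_frobeniusEquiv, RingEquiv.apply_symm_apply]⟩ }
  have : FormallyUnramified C B := .of_restrictScalars A C B
  have : Algebra.FiniteType C B := .of_restrictScalars_finiteType A C B
  have : CharP C p := (algebraMap C B).charP Subtype.val_injective p
  intro b
  obtain ⟨⟨_, x, rfl⟩, rfl⟩ := FormallyUnramified.surjective_algebraMap_of_pow_mem (R := C) p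
    (fun x => ⟨⟨x ^ p, x, rfl⟩, rfl⟩) b
  exact ⟨x, rfl⟩

theorem AlgHom.injective_of_surjective_of_isNilpotent {R S T : Type*} [CommRing R] [CommRing S]
    [CommRing T] [Algebra R S] [Algebra R T] [FormallyUnramified R S]
    [Algebra.FinitePresentation R S] [FormallySmooth R T] [Algebra.FinitePresentation R T]
    (f : S →ₐ[R] T) (hf : Function.Surjective f) (hker : ∀ x, f x = 0 → IsNilpotent x) :
    Function.Injective f := by
  have hnil : IsNilpotent (RingHom.ker (f : S →+* T)) := by
    have hle : RingHom.ker (f : S →+* T) ≤ (⊥ : Ideal S).radical := fun x hx => by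
      obtain ⟨n, hn⟩ := hker x hx
      exact ⟨n, hn⟩
    obtain ⟨n, hn⟩ := Ideal.exists_pow_le_of_le_radical_of_fg hle
      (Algebra.FinitePresentation.ker_fG_of_surjective f hf)
    exact ⟨n, le_bot_iff.mp hn⟩
  let s := FormallySmooth.liftOfSurjective (AlgHom.id R T) f hf hnil
  have hs : s.comp f = AlgHom.id R S := FormallyUnramified.ext' (f : S →+* T) hnil _ _ fun x =>
    FormallySmooth.liftOfSurjective_apply _ f hf hnil (f x)
  exact Function.LeftInverse.injective (g := s) fun x => congr($hs x)

theorem RingHom.injective_of_surjective_of_isNilpotent {R S T : Type*} [CommRing R] [CommRing S]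
    [CommRing T] {i : R →+* S} {j : R →+* T} (hi : i.FormallyUnramified)
    (hi' : i.FinitePresentation) (hj : j.Smooth) (f : S →+* T) (hfij : f.comp i = j)
    (hf : Function.Surjective f) (hker : ∀ x, f x = 0 → IsNilpotent x) : Function.Injective f := by
  algebraize [i, j]
  exact AlgHom.injective_of_surjective_of_isNilpotent ⟨f, fun r => congr($hfij r)⟩ hf hker

theorem frobenius_injective_of_etale (p : ℕ) [Fact p.Prime] (A B : Type u) [CommRing A]
    [CommRing B] [CharP A p] [CharP B p] [PerfectRing A p] [Algebra A B] [Algebra.Etale A B]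
    (hsurj : Function.Surjective (frobenius B p)) : Function.Injective (frobenius B p) := by
  have hi := RingHom.etale_algebraMap.mpr ‹Algebra.Etale A B›
  have hj : ((algebraMap A B).comp (frobeniusEquiv A p : A →+* A)).Etale :=
    RingHom.Etale.respectsIso.2 _ (frobeniusEquiv A p) hi
  refine RingHom.injective_of_surjective_of_isNilpotent hi.formallyUnramified
    ((RingHom.etale_iff_formallyUnramified_and_smooth _).mp hi).2.finitePresentation
    ((RingHom.etale_iff_formallyUnramified_and_smooth _).mp hj).2 (frobenius B p) ?_ hsurj
    fun x hx => ⟨p, hx⟩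
  ext a
  exact ((algebraMap A B).map_frobenius p a).symm

/-- If `A` is a perfect commutative ring of prime characteristic `p` and `B`
is an étale `A`-algebra (formally étale and of finite presentation), then `B` is perfect:
the Frobenius endomorphism `x ↦ x ^ p` of `B` is bijective. -/
theorem perfectRing_of_etale (p : ℕ) [Fact p.Prime]
    (A B : Type u) [CommRing A] [CommRing B] [CharP A p] [CharP B p]
    [PerfectRing A p] [Algebra A B] [Algebra.Etale A B] :
    PerfectRing B p := by
  have hsurj := frobenius_surjective_of_formallyUnramified p A B
  exact ⟨⟨frobenius_injective_of_etale p A B hsurj, hsurj⟩⟩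
end

section
/- Let p be a prime, A a Noetherian integral domain of characteristic p, and B an A-algebra of characteristic p which is finite as an A-module. Then there exists a nonzero element a ∈ A such that, after inverting the image of a, the induced homomorphism of perfections A_perf[a⁻¹] → B_perf[a⁻¹] is of finite type; i.e. the localization of PerfectClosure B p away from the image of a is a finite-type algebra over the localization of PerfectClosure A p away from the image of a. -/
/-!
Write `B = ∑ A eᵢ` and put `Mₙ = ∑ A_perf · eᵢ^(1/pⁿ)` inside `B_perf`: an increasing chain of
`A_perf`-submodules, each generated by `r` elements, whose union is `B_perf`. Their ranks over the
domain `A_perf` are bounded by `r`, so they stabilise and some `s ≠ 0` has `s • M_{N+1} ⊆ M_N`;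
a `p`-power of `s` lies in `A`, so we may take `s = a ∈ A`. Applying `φ⁻ᵏ` and using
`(a^(1/pᵏ))^(pᵏ) = a` gives `a • M_{n+1} ⊆ M_n` for every `n ≥ N`. Hence a power of `a` moves any
element of `B_perf` into the `A_perf`-algebra generated by the `eᵢ^(1/p^N)`, and after inverting
`a` that algebra is everything.
-/

open Module Submodule Set Function

universe u

theorem Submodule.exists_smul_mem_of_le_of_finrank_le {R M : Type*} [CommRing R] [IsDomain R]
    [AddCommGroup M] [Module R M] {N N' : Submodule R M} [Module.Finite R N'] (hle : N ≤ N')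
    (hrank : finrank R N' ≤ finrank R N) : ∃ s : R, s ≠ 0 ∧ ∀ x ∈ N', s • x ∈ N := by
  set N₀ := N.comap N'.subtype
  have hquot : finrank R (N' ⧸ N₀) = 0 := by
    have := N₀.finrank_quotient_add_finrank
    rw [(comapSubtypeEquivOfLe hle).finrank_eq] at this
    omega
  obtain ⟨s, hs, hs0⟩ := annihilator_top_inter_nonZeroDivisors
    ((finrank_eq_zero_iff_isTorsion).mp hquot)
  refine ⟨s, nonZeroDivisors.coe_ne_zero ⟨s, hs0⟩, fun x hx => ?_⟩
  have := mem_annihilator.mp hs (Quotient.mk ⟨x, hx⟩) mem_top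
  rwa [← Quotient.mk_smul, Quotient.mk_eq_zero] at this

theorem Nat.exists_apply_succ_le_of_forall_le {f : ℕ → ℕ} {r : ℕ} (hf : ∀ n, f n ≤ r) :
    ∃ N, f (N + 1) ≤ f N := by
  by_contra! h
  have := (strictMono_nat_of_lt_succ h).le_apply (x := r + 1)
  have := hf (r + 1)
  omega

theorem Submodule.exists_smul_mem_of_monotone {R M : Type*} [CommRing R] [IsDomain R]
    [AddCommGroup M] [Module R M] {P : ℕ → Submodule R M} [∀ n, Module.Finite R (P n)]
    (hP : Monotone P) {r : ℕ} (hr : ∀ n, finrank R (P n) ≤ r) :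
    ∃ N, ∃ s : R, s ≠ 0 ∧ ∀ x ∈ P (N + 1), s • x ∈ P N := by
  obtain ⟨N, hN⟩ := Nat.exists_apply_succ_le_of_forall_le hr
  exact ⟨N, exists_smul_mem_of_le_of_finrank_le (hP N.le_succ) hN⟩

section PerfectRing

variable (R : Type*) {S : Type*} [CommRing R] [CommRing S] [Algebra R S] (p : ℕ)
  [ExpChar S p] [PerfectRing S p]

theorem iterate_frobeniusEquiv_symm_succ_pow (n : ℕ) (x : S) :
    (frobeniusEquiv S p).symm^[n + 1] (x ^ p) = (frobeniusEquiv S p).symm^[n] x := by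
  rw [iterate_succ_apply, frobeniusEquiv_symm_pow]

def rootSpan {ι : Type*} (e : ι → S) (n : ℕ) : Submodule R S :=
  span R (range fun i => (frobeniusEquiv S p).symm^[n] (e i))

instance {ι : Type*} [Finite ι] (e : ι → S) (n : ℕ) : Module.Finite R (rootSpan R p e n) :=
  Module.Finite.span_of_finite R (finite_range _)

theorem finrank_rootSpan_le [StrongRankCondition R] {ι : Type*} [Fintype ι] (e : ι → S) (n : ℕ) :
    finrank R (rootSpan R p e n) ≤ Fintype.card ι :=
  finrank_range_le_card _

variable [ExpChar R p] [PerfectRing R p]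

theorem iterate_frobeniusEquiv_symm_smul (k : ℕ) (r : R) (x : S) :
    (frobeniusEquiv S p).symm^[k] (r • x) =
      (frobeniusEquiv R p).symm^[k] r • (frobeniusEquiv S p).symm^[k] x := by
  rw [Algebra.smul_def, Algebra.smul_def, iterate_map_mul,
    RingHom.map_iterate_frobeniusEquiv_symm]

theorem iterate_frobeniusEquiv_symm_mem_span {T : Set S} {x : S} (hx : x ∈ span R T) (k : ℕ) :
    (frobeniusEquiv S p).symm^[k] x ∈ span R ((frobeniusEquiv S p).symm^[k] '' T) := by
  induction hx using span_induction with
  | mem y hy => exact subset_span (mem_image_of_mem _ hy)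
  | zero => rw [iterate_map_zero]; exact zero_mem _
  | add y z _ _ hy hz => rw [iterate_map_add]; exact add_mem hy hz
  | smul r y _ hy => rw [iterate_frobeniusEquiv_symm_smul]; exact smul_mem _ _ hy

variable {R p} {ι : Type*} {e : ι → S}

theorem iterate_frobeniusEquiv_symm_mem_rootSpan {n : ℕ} {x : S} (hx : x ∈ rootSpan R p e n)
    (k : ℕ) : (frobeniusEquiv S p).symm^[k] x ∈ rootSpan R p e (k + n) := by
  have := iterate_frobeniusEquiv_symm_mem_span R p hx k
  rwa [← range_comp, comp_def, ← funext fun i => iterate_add_apply _ k n _] at this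

theorem rootSpan_mono (he : ∀ i, e i ^ p ∈ rootSpan R p e 0) : Monotone (rootSpan R p e) := by
  refine monotone_nat_of_le_succ fun n => span_le.mpr ?_
  rintro _ ⟨i, rfl⟩
  have := iterate_frobeniusEquiv_symm_mem_rootSpan (he i) (n + 1)
  rwa [add_zero, iterate_frobeniusEquiv_symm_succ_pow] at this

/-- To pass from level `N` to level `k + N`, apply `φ⁻ᵏ` and multiply by `(φ⁻ᵏ r) ^ (p ^ k - 1)`,
using `(φ⁻ᵏ r) ^ p ^ k = r`. -/
theorem smul_mem_rootSpan_of_succ {r : R} {N : ℕ}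
    (h : ∀ x ∈ rootSpan R p e (N + 1), r • x ∈ rootSpan R p e N)
    {n : ℕ} (hn : N ≤ n) {x : S} (hx : x ∈ rootSpan R p e (n + 1)) : r • x ∈ rootSpan R p e n := by
  obtain ⟨k, rfl⟩ := Nat.exists_eq_add_of_le' hn
  have hroot : ((frobeniusEquiv R p).symm^[k] r) ^ (p ^ k - 1) * (frobeniusEquiv R p).symm^[k] r
      = r := by
    rw [← pow_succ, Nat.sub_add_cancel (Nat.one_le_pow _ _ (expChar_pos R p)),
      iterate_frobeniusEquiv_symm_pow_p_pow]
  have hgen : ∀ i, r • (frobeniusEquiv S p).symm^[k + N + 1] (e i) ∈ rootSpan R p e (k + N) := by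
    intro i
    have := iterate_frobeniusEquiv_symm_mem_rootSpan (h _ (subset_span ⟨i, rfl⟩)) k
    rw [iterate_frobeniusEquiv_symm_smul, ← iterate_add_apply] at this
    rw [← hroot, mul_smul]
    exact smul_mem _ _ this
  induction hx using span_induction with
  | mem y hy => obtain ⟨i, rfl⟩ := hy; exact hgen i
  | zero => rw [smul_zero]; exact zero_mem _
  | add y z _ _ hy hz => rw [smul_add]; exact add_mem hy hz
  | smul c y _ hy => rw [smul_comm]; exact smul_mem _ _ hy

theorem pow_smul_mem_rootSpan (hmono : Monotone (rootSpan R p e)) {r : R} {N : ℕ}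
    (h : ∀ x ∈ rootSpan R p e (N + 1), r • x ∈ rootSpan R p e N)
    {n : ℕ} {x : S} (hx : x ∈ rootSpan R p e n) : r ^ n • x ∈ rootSpan R p e N := by
  induction n generalizing x with
  | zero => simpa using hmono (Nat.zero_le N) hx
  | succ n ih =>
    rcases le_or_gt N n with hn | hn
    · rw [pow_succ, mul_smul]
      exact ih (smul_mem_rootSpan_of_succ h hn hx)
    · exact smul_mem _ _ (hmono hn hx)

end PerfectRing

theorem Localization.awayMap_finiteType_of_pow_smul_mem {R S : Type u} [CommRing R] [CommRing S]
    [Algebra R S] (a : R) (S' : Subalgebra R S) [Algebra.FiniteType R S']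
    (h : ∀ x : S, ∃ m : ℕ, a ^ m • x ∈ S') :
    (Localization.awayMap (algebraMap R S) a).FiniteType := by
  have hS' : (awayMap (algebraMap R S') a).FiniteType :=
    RingHom.localization_away_map_finiteType _ _ _ _ _ a
      (RingHom.finiteType_algebraMap.mpr inferInstance)
  have : IsLocalization.Away (S'.val (algebraMap R S' a)) (Away (algebraMap R S a)) :=
    inferInstanceAs (IsLocalization.Away (algebraMap R S a) _)
  have hsurj : Surjective (IsLocalization.Away.map (Away (algebraMap R S' a))
      (Away (algebraMap R S a)) S'.val.toRingHom (algebraMap R S' a)) := by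
    refine (IsLocalization.Away.map_surjective_iff _ _ _ _).mpr fun x => ?_
    obtain ⟨m, hm⟩ := h x
    exact ⟨⟨_, hm⟩, m, by simp [Algebra.smul_def]⟩
  have hcomp : awayMap (algebraMap R S) a = (IsLocalization.Away.map (Away (algebraMap R S' a))
      (Away (algebraMap R S a)) S'.val.toRingHom (algebraMap R S' a)).comp
        (awayMap (algebraMap R S') a) :=
    IsLocalization.ringHom_ext (Submonoid.powers a) <| RingHom.ext fun x => by
      simp [IsLocalization.Away.map, IsLocalization.map_eq]
  rw [hcomp]
  exact hS'.comp_surjective hsurj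

namespace PerfectClosure

variable (K : Type u) [CommRing K] (p : ℕ) [Fact p.Prime] [CharP K p]

theorem of_injective [IsReduced K] : Injective (of K p) :=
  fun x y h => (eq_iff K p (0, x) (0, y)).mp h

instance [IsDomain K] : IsDomain (PerfectClosure K p) := by
  have hp : p ≠ 0 := (Fact.out : p.Prime).ne_zero
  have hzero : ∀ {z : PerfectClosure K p} {n k : ℕ} {w : K},
      of K p w = z ^ p ^ n → w ^ p ^ k = 0 → z = 0 := fun hw hw0 => IsReduced.eq_zero _
    ⟨_, by rw [← hw, (pow_eq_zero_iff (pow_ne_zero _ hp)).mp hw0, map_zero]⟩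
  refine @NoZeroDivisors.to_isDomain _ _ _ ⟨fun {x y} hxy => ?_⟩
  obtain ⟨n, u, hu⟩ := IsPRadical.pow_mem (of K p) p x
  obtain ⟨m, v, hv⟩ := IsPRadical.pow_mem (of K p) p y
  have huv : u ^ p ^ m * v ^ p ^ n = 0 := by
    apply of_injective K p
    rw [map_mul, map_pow, map_pow, hu, hv, ← pow_mul, ← pow_mul, mul_comm (p ^ n), ← mul_pow, hxy,
      zero_pow (mul_ne_zero (pow_ne_zero _ hp) (pow_ne_zero _ hp)), map_zero]
  exact (mul_eq_zero.mp huv).imp (hzero hu) (hzero hv)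

theorem exists_iterate_frobeniusEquiv_symm_of (x : PerfectClosure K p) :
    ∃ n y, (frobeniusEquiv _ p).symm^[n] (of K p y) = x := by
  obtain ⟨⟨n, y⟩, rfl⟩ := mk_surjective K p x
  refine ⟨n, y, (injective_frobenius _ p).iterate n ?_⟩
  rw [iterate_frobenius_mk, (LeftInverse.iterate (frobenius_apply_frobeniusEquiv_symm _ p) n)]

variable {p} (A B : Type u) [CommRing A] [CharP A p] [CommRing B] [CharP B p] [Algebra A B]

noncomputable instance : Algebra (PerfectClosure A p) (PerfectClosure B p) :=
  (lift A p _ ((of B p).comp (algebraMap A B))).toAlgebra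

variable {A B}

theorem algebraMap_of (a : A) :
    algebraMap (PerfectClosure A p) (PerfectClosure B p) (of A p a) = of B p (algebraMap A B a) :=
  rfl

variable {ι : Type*} {e : ι → B}

theorem of_mem_rootSpan (he : span A (range e) = ⊤) (b : B) :
    of B p b ∈ rootSpan (PerfectClosure A p) p (of B p ∘ e) 0 := by
  have hb : b ∈ span A (range e) := he ▸ mem_top
  induction hb using span_induction with
  | mem y hy => obtain ⟨i, rfl⟩ := hy; exact subset_span ⟨i, rfl⟩
  | zero => rw [map_zero]; exact zero_mem _
  | add y z _ _ hy hz => rw [map_add]; exact add_mem hy hz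
  | smul a y _ hy =>
    rw [Algebra.smul_def, map_mul, ← algebraMap_of, ← Algebra.smul_def]
    exact smul_mem _ _ hy

theorem exists_mem_rootSpan (he : span A (range e) = ⊤) (x : PerfectClosure B p) :
    ∃ n, x ∈ rootSpan (PerfectClosure A p) p (of B p ∘ e) n := by
  obtain ⟨n, b, rfl⟩ := exists_iterate_frobeniusEquiv_symm_of B p x
  exact ⟨n + 0, iterate_frobeniusEquiv_symm_mem_rootSpan (of_mem_rootSpan he b) n⟩

theorem monotone_rootSpan (he : span A (range e) = ⊤) :
    Monotone (rootSpan (PerfectClosure A p) p (of B p ∘ e)) :=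
  rootSpan_mono fun i => by rw [comp_apply, ← map_pow]; exact of_mem_rootSpan he _

end PerfectClosure

open PerfectClosure in
theorem perfection_finite_localization_finiteType_general (p : ℕ) [Fact p.Prime]
    (A B : Type u) [CommRing A] [IsDomain A] [CharP A p]
    [CommRing B] [CharP B p] [Algebra A B] [Module.Finite A B] :
    ∃ a : A, a ≠ 0 ∧
      (Localization.awayMap
        (PerfectClosure.lift A p (PerfectClosure B p)
          ((PerfectClosure.of B p).comp (algebraMap A B)))
        (PerfectClosure.of A p a)).FiniteType := by
  obtain ⟨r, e, he⟩ := Module.Finite.exists_fin (R := A) (M := B)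
  set P := rootSpan (PerfectClosure A p) p (of B p ∘ e)
  have hmono : Monotone P := monotone_rootSpan he
  obtain ⟨N, s, hs, hsP⟩ := exists_smul_mem_of_monotone hmono fun n => finrank_rootSpan_le _ p _ n
  obtain ⟨M, a, ha⟩ := IsPRadical.pow_mem (of A p) p s
  have haP : ∀ x ∈ P (N + 1), of A p a • x ∈ P N := by
    intro x hx
    obtain ⟨k, hk⟩ := Nat.exists_eq_add_one.mpr (pow_pos (Fact.out : p.Prime).pos M)
    rw [ha, hk, pow_succ, mul_smul]
    exact smul_mem _ _ (hsP x hx)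
  refine ⟨a, fun ha0 => hs ?_, ?_⟩
  · rw [ha0, map_zero] at ha
    exact (pow_eq_zero_iff (pow_ne_zero _ (Fact.out : p.Prime).ne_zero)).mp ha.symm
  set G := range fun i => (frobeniusEquiv (PerfectClosure B p) p).symm^[N] (of B p (e i))
  have : Algebra.FiniteType (PerfectClosure A p) (Algebra.adjoin _ G) :=
    .adjoin_of_finite (finite_range _)
  refine Localization.awayMap_finiteType_of_pow_smul_mem _ (Algebra.adjoin _ G) fun x => ?_
  obtain ⟨n, hn⟩ := exists_mem_rootSpan he x
  exact ⟨n, Algebra.span_le_adjoin _ _ (pow_smul_mem_rootSpan hmono haP hn)⟩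

open PerfectClosure in
/-- Let `A` be a Noetherian integral domain of characteristic `p` and `B` an
`A`-algebra of characteristic `p` that is finite as an `A`-module.  Then there is a nonzero
`a : A` such that the induced map of perfections `A_perf[a⁻¹] → B_perf[a⁻¹]` (localizations away
from the image of `a`) is of finite type. -/
theorem perfection_finite_localization_finiteType (p : ℕ) [Fact p.Prime]
    (A B : Type u) [CommRing A] [IsDomain A] [IsNoetherianRing A] [CharP A p]
    [CommRing B] [CharP B p] [Algebra A B] [Module.Finite A B] :
    ∃ a : A, a ≠ 0 ∧
      (Localization.awayMap
        (PerfectClosure.lift A p (PerfectClosure B p)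
          ((PerfectClosure.of B p).comp (algebraMap A B)))
        (PerfectClosure.of A p a)).FiniteType :=
  perfection_finite_localization_finiteType_general p A B
end

section
/- Let k be an algebraically closed field and let Y be a reduced scheme of finite type over k (the structure morphism f : Y → Spec k is quasi-compact and locally of finite type). If f is topologically unramified, i.e. the diagonal morphism Y → Y ×_{Spec k} Y is an open map on underlying topological spaces, then f is étale. -/
universe u

open AlgebraicGeometry CategoryTheory CategoryTheory.Limits

/-- A morphism of schemes `f : Y ⟶ X` is topologically unramified if its diagonal morphism
`Y ⟶ Y ×ₓ Y` is an open map on underlying topological spaces. -/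
def TopologicallyUnramified {Y X : AlgebraicGeometry.Scheme} (f : Y ⟶ X) : Prop :=
  IsOpenMap (pullback.diagonal f).base

/-!
For a `k`-point `σ` of `Y`, the preimage of the (open) image of the diagonal under
`(id, σ ∘ f) : Y → Y ×ₖ Y` is the image of `σ`, so every `k`-point is open. Over an algebraically
closed field the `k`-points are exactly the closed points, and `Y` is Jacobson, so every point is
open. Each point `y` is then a reduced one-point open subscheme on which the `k`-point at `y` is
a section of the structure map that is also surjective; separatedness and reducedness force it to
be an inverse, so `Y` is locally isomorphic to `Spec k`.
-/

lemma JacobsonSpace.discreteTopology_of_isOpen_singleton {X : Type*} [TopologicalSpace X]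
    [JacobsonSpace X] (h : ∀ x ∈ closedPoints X, IsOpen {x}) : DiscreteTopology X := by
  refine discreteTopology_iff_isOpen_singleton.mpr fun x ↦ ?_
  obtain ⟨c, hcx, hc⟩ := nonempty_inter_closedPoints (Set.singleton_nonempty x).closure
    isClosed_closure.isLocallyClosed
  obtain ⟨_, rfl, rfl⟩ := mem_closure_iff.mp hcx {c} (h c hc) rfl
  exact h _ hc

namespace AlgebraicGeometry

lemma isIso_of_comp_eq_id_of_isDominant {X S : Scheme.{u}} [IsReduced X] (g : X ⟶ S)
    [IsSeparated g] (s : S ⟶ X) [IsDominant s] (hs : s ≫ g = 𝟙 S) : IsIso g :=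
  ⟨s, ext_of_isDominant_of_isSeparated g (by simp [hs]) s (by simp [reassoc_of% hs]), hs⟩

lemma isIso_of_isReduced_of_subsingleton {K : Type u} [Field K] [IsAlgClosed K] {X : Scheme.{u}}
    [IsReduced X] [Subsingleton X] [Nonempty X] (g : X ⟶ Spec (.of K)) [LocallyOfFiniteType g] :
    IsIso g := by
  obtain ⟨x⟩ := ‹Nonempty X›
  have hx : IsClosed {x} := by simp
  have : IsSeparated g := isSeparated_of_injective g (Function.injective_of_subsingleton _)
  have : Surjective (pointOfClosedPoint g x hx) := ⟨fun _ ↦ ⟨default, Subsingleton.elim _ _⟩⟩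
  exact isIso_of_comp_eq_id_of_isDominant g _ (pointOfClosedPoint_comp g x hx)

namespace TopologicallyUnramified

lemma isOpen_range_of_comp_eq_id {Y S : Scheme.{u}} {f : Y ⟶ S} (hf : TopologicallyUnramified f)
    (σ : S ⟶ Y) (hσ : σ ≫ f = 𝟙 S) : IsOpen (Set.range σ) := by
  let i : Y ⟶ pullback f f :=
    pullback.lift (𝟙 Y) (f ≫ σ) (by rw [Category.assoc, hσ, Category.comp_id, Category.id_comp])
  suffices i ⁻¹' Set.range (pullback.diagonal f) = Set.range σ by
    rw [← this]
    exact hf.isOpen_range.preimage i.continuous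
  have hσi : σ ≫ i = σ ≫ pullback.diagonal f := by
    ext1
    · rw [Category.assoc, Category.assoc, pullback.lift_fst, pullback.diagonal_fst]
    · rw [Category.assoc, Category.assoc, pullback.lift_snd, pullback.diagonal_snd,
        reassoc_of% hσ, Category.comp_id]
  ext z
  constructor
  · rintro ⟨w, hw⟩
    have hfst := congr((pullback.fst f f) $hw)
    have hsnd := congr((pullback.snd f f) $hw)
    simp only [← Scheme.Hom.comp_apply, i, pullback.diagonal_fst, pullback.diagonal_snd,
      pullback.lift_fst, pullback.lift_snd] at hfst hsnd
    simp only [Scheme.Hom.comp_apply, Scheme.Hom.id_base, TopCat.hom_id,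
      ContinuousMap.id_apply] at hfst hsnd
    exact ⟨f z, hsnd.symm.trans hfst⟩
  · rintro ⟨t, rfl⟩
    exact ⟨σ t, by simpa using congr($hσi t).symm⟩

lemma isOpen_singleton_of_isClosed {K : Type u} [Field K] [IsAlgClosed K] {X : Scheme.{u}}
    {f : X ⟶ Spec (.of K)} [LocallyOfFiniteType f] (hf : TopologicallyUnramified f) (x : X)
    (hx : IsClosed {x}) : IsOpen {x} := by
  have := hf.isOpen_range_of_comp_eq_id _ (pointOfClosedPoint_comp f x hx)
  rwa [Set.range_eq_singleton (pointOfClosedPoint_apply f x hx)] at this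

lemma discreteTopology {K : Type u} [Field K] [IsAlgClosed K] {X : Scheme.{u}}
    {f : X ⟶ Spec (.of K)} [LocallyOfFiniteType f] (hf : TopologicallyUnramified f) :
    DiscreteTopology X :=
  have := LocallyOfFiniteType.jacobsonSpace f
  JacobsonSpace.discreteTopology_of_isOpen_singleton hf.isOpen_singleton_of_isClosed

end TopologicallyUnramified

end AlgebraicGeometry

theorem isEtale_of_topologicallyUnramified_of_reduced_general
    (k : Type u) [Field k] [IsAlgClosed k]
    (Y : AlgebraicGeometry.Scheme.{u}) [IsReduced Y]
    (f : Y ⟶ Spec (CommRingCat.of k)) [LocallyOfFiniteType f]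
    (hf : TopologicallyUnramified f) :
    IsEtale f := by
  have := hf.discreteTopology
  -- not found by instance search, which cannot guess the ring-hom property `RingHom.Etale`
  have : IsZariskiLocalAtSource @Etale := HasRingHomProperty.instIsZariskiLocalAtSource
  let U (y : Y) : Y.Opens := ⟨{y}, isOpen_discrete _⟩
  have hU : iSup U = ⊤ := top_le_iff.mp fun y _ ↦ TopologicalSpace.Opens.mem_iSup.mpr ⟨y, rfl⟩
  refine IsZariskiLocalAtSource.of_iSup_eq_top (P := @Etale) U hU fun y ↦ ?_
  have : Subsingleton (U y) := Set.subsingleton_singleton.coe_sort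
  have : Nonempty (U y) := ⟨⟨y, rfl⟩⟩
  have := isIso_of_isReduced_of_subsingleton ((U y).ι ≫ f)
  infer_instance

/-- Let `k` be an algebraically closed field and `Y` a reduced scheme of finite
type over `k`.  If the structure morphism `f : Y ⟶ Spec k` is topologically unramified, then it
is étale. -/
theorem isEtale_of_topologicallyUnramified_of_reduced
    (k : Type u) [Field k] [IsAlgClosed k]
    (Y : AlgebraicGeometry.Scheme.{u}) [IsReduced Y]
    (f : Y ⟶ Spec (CommRingCat.of k)) [QuasiCompact f] [LocallyOfFiniteType f]
    (hf : TopologicallyUnramified f) :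
    IsEtale f :=
  isEtale_of_topologicallyUnramified_of_reduced_general k Y f hf
end

section
/- Let f : Z → X be a closed immersion of schemes with both Z and X reduced. Then the set-theoretic image of f is an open subset of X if and only if f is an open immersion. -/
open AlgebraicGeometry CategoryTheory

namespace AlgebraicGeometry

lemma IsOpenImmersion.surjective_lift_of_range_eq {X Y Z : Scheme} (f : X ⟶ Z)
    [IsOpenImmersion f] (g : Y ⟶ Z) (e : Set.range g.base = Set.range f.base) :
    Surjective (IsOpenImmersion.lift f g e.le) where
  surj x := by
    obtain ⟨y, hy⟩ : f.base x ∈ Set.range g.base := e ▸ ⟨x, rfl⟩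
    refine ⟨y, f.isOpenEmbedding.injective ?_⟩
    rw [← Scheme.Hom.comp_apply, IsOpenImmersion.lift_fac, hy]

/-- A closed immersion onto an open subset of a reduced scheme is an isomorphism onto that open
subscheme, since a surjective closed immersion into a reduced scheme is an isomorphism. -/
lemma IsClosedImmersion.isOpenImmersion_of_isOpen_range {Z X : Scheme} (f : Z ⟶ X)
    [IsClosedImmersion f] [IsReduced X] (h : IsOpen (Set.range f.base)) :
    IsOpenImmersion f := by
  let U : X.Opens := ⟨Set.range f.base, h⟩
  have e : Set.range f.base = Set.range U.ι.base := (Scheme.Opens.range_ι U).symm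
  let g : Z ⟶ U := IsOpenImmersion.lift U.ι f e.le
  have hg : g ≫ U.ι = f := IsOpenImmersion.lift_fac U.ι f e.le
  have : IsClosedImmersion g := by
    have : IsClosedImmersion (g ≫ U.ι) := hg ▸ ‹_›
    exact IsClosedImmersion.of_comp g U.ι
  have : IsReduced U := isReduced_of_isOpenImmersion U.ι
  have : Surjective g := IsOpenImmersion.surjective_lift_of_range_eq U.ι f e
  have : IsIso g := isIso_of_isClosedImmersion_of_surjective g
  rw [← hg]
  infer_instance

end AlgebraicGeometry

theorem isOpenImmersion_iff_isOpen_range_of_isClosedImmersion_general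
    {Z X : AlgebraicGeometry.Scheme} (f : Z ⟶ X) [IsClosedImmersion f]
    [IsReduced X] :
    IsOpen (Set.range f.base) ↔ IsOpenImmersion f :=
  ⟨IsClosedImmersion.isOpenImmersion_of_isOpen_range f,
    fun _ ↦ f.isOpenEmbedding.isOpen_range⟩

/-- Let `f : Z ⟶ X` be a closed immersion of schemes with both `Z` and `X`
reduced.  Then the set-theoretic image of `f` is open in `X` if and only if `f` is an open
immersion. -/
theorem isOpenImmersion_iff_isOpen_range_of_isClosedImmersion
    {Z X : AlgebraicGeometry.Scheme} (f : Z ⟶ X) [IsClosedImmersion f]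
    [IsReduced Z] [IsReduced X] :
    IsOpen (Set.range f.base) ↔ IsOpenImmersion f :=
  isOpenImmersion_iff_isOpen_range_of_isClosedImmersion_general f
end

section
/- Let C be a category with pullbacks equipped with a subcanonical Grothendieck topology J (i.e. every representable presheaf is a J-sheaf). Let g : X' → X be a morphism such that the sieve generated by {g} is a J-covering sieve of X, and write X'' = X' ×_X X' with the two projections p₁, p₂ : X'' → X'. Let f : Y → X and h : Z → X be morphisms, and suppose φ : X' ×_X Y ≅ X' ×_X Z is an isomorphism over X' whose two pullbacks to X'' agree: under the canonical isomorphisms X'' ×_{X'} (X' ×_X Y) ≅ X'' ×_X Y (for either projection pᵢ) and likewise for Z, the pullback of φ along p₁ equals the pullback of φ along p₂ as isomorphisms X'' ×_X Y ≅ X'' ×_X Z over X''. Then there exists an isomorphism Y ≅ Z over X. -/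
universe v u

open CategoryTheory CategoryTheory.Limits

/-!
In a subcanonical site a morphism generating a covering sieve is an effective epimorphism, and
covering sieves are stable under base change, so `pullback.snd g f` and `pullback.snd g h` are
effective epimorphisms. The cocycle condition makes `φ.hom ≫ pullback.snd g h` coequalize every
pair of maps that `pullback.snd g f` equalizes, so it descends to `Y ⟶ Z`. Since `φ` lives over
`X'`, the same then holds for `φ.inv`, which descends to `Z ⟶ Y`; the two descended maps are
inverse to each other because effective epimorphisms are epimorphisms.
-/

namespace CategoryTheory

variable {C : Type u} [Category.{v} C]

lemma GrothendieckTopology.effectiveEpi_of_generate_singleton_mem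
    (J : GrothendieckTopology C) [J.Subcanonical] {E Y : C} (s : E ⟶ Y)
    (hs : Sieve.generate (Presieve.singleton s) ∈ J Y) : EffectiveEpi s :=
  (Sieve.effectiveEpimorphic_singleton s).mp <|
    (Presieve.EffectiveEpimorphic.iff_forall_isSheafFor_yoneda _).mpr fun _ =>
      (Presieve.isSheafFor_iff_generate _).mpr <|
        GrothendieckTopology.Subcanonical.isSheaf_of_isRepresentable _ _ hs

lemma exists_iso_comp_eq_of_effectiveEpi {E₁ E₂ Y Z : C} (e₁ : E₁ ⟶ Y) (e₂ : E₂ ⟶ Z)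
    [EffectiveEpi e₁] [EffectiveEpi e₂] (φ : E₁ ≅ E₂)
    (hom_compat : ∀ {V : C} (a b : V ⟶ E₁), a ≫ e₁ = b ≫ e₁ → a ≫ φ.hom ≫ e₂ = b ≫ φ.hom ≫ e₂)
    (inv_compat : ∀ {V : C} (a b : V ⟶ E₂), a ≫ e₂ = b ≫ e₂ → a ≫ φ.inv ≫ e₁ = b ≫ φ.inv ≫ e₁) :
    ∃ ψ : Y ≅ Z, e₁ ≫ ψ.hom = φ.hom ≫ e₂ := by
  have fac_hom := EffectiveEpi.fac e₁ (φ.hom ≫ e₂) hom_compat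
  have fac_inv := EffectiveEpi.fac e₂ (φ.inv ≫ e₁) inv_compat
  refine ⟨⟨EffectiveEpi.desc e₁ _ hom_compat, EffectiveEpi.desc e₂ _ inv_compat, ?_, ?_⟩, fac_hom⟩
  · rw [← cancel_epi e₁, reassoc_of% fac_hom, fac_inv, Iso.hom_inv_id_assoc, Category.comp_id]
  · rw [← cancel_epi e₂, reassoc_of% fac_inv, fac_hom, Iso.inv_hom_id_assoc, Category.comp_id]

variable [HasPullbacks C] {X X' Y Z : C} (g : X' ⟶ X) (f : Y ⟶ X)

lemma generate_singleton_pullback_snd_mem (J : GrothendieckTopology C)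
    (hg : Sieve.generate (Presieve.singleton g) ∈ J X) :
    Sieve.generate (Presieve.singleton (pullback.snd g f)) ∈ J Y := by
  rw [← Presieve.pullback_singleton, Sieve.pullbackArrows_comm]
  exact J.pullback_stable f hg

/-- `(X' ×ₓ X') ×ₓ Y` with these two maps is the kernel pair of `pullback.snd g f`. -/
lemma comp_eq_comp_of_snd_eq_of_cocycle {W : C} (u : pullback g f ⟶ W)
    (hu : pullback.map (pullback.fst g g ≫ g) f g f (pullback.fst g g) (𝟙 Y) (𝟙 X)
          (by simp) (by simp) ≫ u =
      pullback.map (pullback.fst g g ≫ g) f g f (pullback.snd g g) (𝟙 Y) (𝟙 X)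
          (by simp [pullback.condition]) (by simp) ≫ u)
    {V : C} (a b : V ⟶ pullback g f) (hab : a ≫ pullback.snd g f = b ≫ pullback.snd g f) :
    a ≫ u = b ≫ u := by
  have hfst : (a ≫ pullback.fst g f) ≫ g = (b ≫ pullback.fst g f) ≫ g := by
    simp only [Category.assoc, pullback.condition, reassoc_of% hab]
  let w : V ⟶ pullback (pullback.fst g g ≫ g) f :=
    pullback.lift (pullback.lift _ _ hfst) (a ≫ pullback.snd g f)
      (by rw [pullback.lift_fst_assoc, Category.assoc, Category.assoc, pullback.condition])
  have hwa : w ≫ pullback.map _ _ _ _ (pullback.fst g g) (𝟙 Y) (𝟙 X) (by simp) (by simp) = a := by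
    apply pullback.hom_ext <;>
      simp only [w, Category.assoc, pullback.lift_fst, pullback.lift_fst_assoc, pullback.lift_snd,
        Category.comp_id]
  have hwb : w ≫ pullback.map _ _ _ _ (pullback.snd g g) (𝟙 Y) (𝟙 X)
      (by simp [pullback.condition]) (by simp) = b := by
    apply pullback.hom_ext <;>
      simp only [w, Category.assoc, pullback.lift_fst, pullback.lift_fst_assoc, pullback.lift_snd,
        Category.comp_id, hab]
  simpa only [reassoc_of% hwa, reassoc_of% hwb] using w ≫= hu

variable {g f} {h : Z ⟶ X}

lemma inv_comp_snd_compat_of_hom_comp_snd_compat (φ : pullback g f ≅ pullback g h)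
    (hφ : φ.hom ≫ pullback.fst g h = pullback.fst g f)
    (hom_compat : ∀ {V : C} (a b : V ⟶ pullback g f), a ≫ pullback.snd g f = b ≫ pullback.snd g f →
      a ≫ φ.hom ≫ pullback.snd g h = b ≫ φ.hom ≫ pullback.snd g h)
    {V : C} (a b : V ⟶ pullback g h) (hab : a ≫ pullback.snd g h = b ≫ pullback.snd g h) :
    a ≫ φ.inv ≫ pullback.snd g f = b ≫ φ.inv ≫ pullback.snd g f := by
  have hφ' : φ.inv ≫ pullback.fst g f = pullback.fst g h := by rw [← hφ, Iso.inv_hom_id_assoc]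
  -- `c` has the first component of `a` and the second of `b ≫ φ.inv`; `hom_compat` shows that
  -- `φ` sends it to `a`.
  let c : V ⟶ pullback g f :=
    pullback.lift (a ≫ pullback.fst g h) (b ≫ φ.inv ≫ pullback.snd g f) (by
      rw [Category.assoc, Category.assoc, Category.assoc, ← pullback.condition, reassoc_of% hφ',
        pullback.condition, reassoc_of% hab])
  have hc : c ≫ φ.hom = a := by
    apply pullback.hom_ext
    · rw [Category.assoc, hφ, pullback.lift_fst]
    · rw [Category.assoc, hom_compat c (b ≫ φ.inv) (by rw [pullback.lift_snd, Category.assoc]),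
        Category.assoc, Iso.inv_hom_id_assoc, hab]
  rw [← hc, Category.assoc, Iso.hom_inv_id_assoc, pullback.lift_snd]

end CategoryTheory

/-- Descent of objects along a cover in a subcanonical site.  Let `C` have
pullbacks and let `J` be a subcanonical Grothendieck topology on `C`.  Let `g : X' ⟶ X`
generate a `J`-covering sieve, and let `X'' = X' ×ₓ X'` with projections `p₁, p₂`.  Given
`f : Y ⟶ X`, `h : Z ⟶ X` and an isomorphism `φ : X' ×ₓ Y ≅ X' ×ₓ Z` over `X'` whose two
pullbacks to `X''` agree (equivalently, under the canonical identifications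
`X'' ×_{X'} (X' ×ₓ Y) ≅ X'' ×ₓ Y`, the two induced maps `X'' ×ₓ Y ⟶ Z` agree),
there is an isomorphism `Y ≅ Z` over `X`. -/
theorem descent_of_objects_subcanonical
    {C : Type u} [Category.{v} C] [HasPullbacks C]
    (J : GrothendieckTopology C) [J.Subcanonical]
    {X X' Y Z : C} (g : X' ⟶ X)
    (hg : Sieve.generate (Presieve.singleton g) ∈ J X)
    (f : Y ⟶ X) (h : Z ⟶ X)
    (φ : pullback g f ≅ pullback g h)
    (hφ : φ.hom ≫ pullback.fst g h = pullback.fst g f)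
    (hcocycle :
      pullback.map (pullback.fst g g ≫ g) f g f (pullback.fst g g) (𝟙 Y) (𝟙 X)
          (by rw [Category.comp_id]) (by rw [Category.comp_id, Category.id_comp]) ≫
        φ.hom ≫ pullback.snd g h =
      pullback.map (pullback.fst g g ≫ g) f g f (pullback.snd g g) (𝟙 Y) (𝟙 X)
          (by rw [Category.comp_id, pullback.condition])
          (by rw [Category.comp_id, Category.id_comp]) ≫
        φ.hom ≫ pullback.snd g h) :
    ∃ ψ : Y ≅ Z, ψ.hom ≫ h = f := by
  have := J.effectiveEpi_of_generate_singleton_mem _ (generate_singleton_pullback_snd_mem g f J hg)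
  have := J.effectiveEpi_of_generate_singleton_mem _ (generate_singleton_pullback_snd_mem g h J hg)
  have hom_compat := fun {V : C} => comp_eq_comp_of_snd_eq_of_cocycle (V := V) g f _ hcocycle
  obtain ⟨ψ, hψ⟩ := exists_iso_comp_eq_of_effectiveEpi _ _ φ hom_compat
    (inv_comp_snd_compat_of_hom_comp_snd_compat φ hφ hom_compat)
  refine ⟨ψ, ?_⟩
  rw [← cancel_epi (pullback.snd g f), reassoc_of% hψ, ← pullback.condition, reassoc_of% hφ,
    pullback.condition]
end

section
/- Let k be a field of characteristic different from 2. Then the prime spectrum of the ring k[x,y,z]/(x² − y², x² − z²) is a connected topological space. -/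
universe u

open MvPolynomial

section Aux

variable {k : Type u} [Field k]

/-- If every generator of `S` is killed by the substitution `aeval g` and each `X i - g i`
lies in `span S`, then `span S` is exactly the kernel of the substitution. -/
lemma span_eq_ker_aux (S : Set (MvPolynomial (Fin 3) k)) (g : Fin 3 → MvPolynomial (Fin 3) k)
    (h1 : ∀ s ∈ S, aeval g s = 0)
    (h2 : ∀ i, X i - g i ∈ Ideal.span S) :
    Ideal.span S
      = RingHom.ker (aeval g : MvPolynomial (Fin 3) k →ₐ[k] MvPolynomial (Fin 3) k) := by
  apply le_antisymm
  · rw [Ideal.span_le]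
    intro s hs
    simpa [RingHom.mem_ker] using h1 s hs
  · intro f hf
    have hf0 : aeval g f = 0 := hf
    have key : (Ideal.Quotient.mkₐ k (Ideal.span S)).comp
        (aeval g : MvPolynomial (Fin 3) k →ₐ[k] MvPolynomial (Fin 3) k)
        = Ideal.Quotient.mkₐ k (Ideal.span S) := by
      apply MvPolynomial.algHom_ext
      intro i
      simp only [AlgHom.comp_apply, aeval_X, Ideal.Quotient.mkₐ_eq_mk]
      exact Ideal.Quotient.eq.mpr (by simpa using (Ideal.span S).neg_mem (h2 i))
    have := congrArg (fun φ => φ f) key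
    simp only [AlgHom.comp_apply, Ideal.Quotient.mkₐ_eq_mk, hf0, map_zero] at this
    exact (Ideal.Quotient.eq_zero_iff_mem).mp this.symm

lemma isPrime_lineIdeal (ε1 ε2 : k) (h1 : ε1 ^ 2 = 1) (h2 : ε2 ^ 2 = 1) :
    (Ideal.span {X 0 - C ε1 * X 1, X 0 - C ε2 * X 2} :
      Ideal (MvPolynomial (Fin 3) k)).IsPrime := by
  have hC1 : (C ε1 : MvPolynomial (Fin 3) k) ^ 2 = 1 := by rw [← map_pow, h1, map_one]
  have hC2 : (C ε2 : MvPolynomial (Fin 3) k) ^ 2 = 1 := by rw [← map_pow, h2, map_one]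
  rw [span_eq_ker_aux _ ![X 0, C ε1 * X 0, C ε2 * X 0] ?_ ?_]
  · exact RingHom.ker_isPrime _
  · intro s hs
    simp only [Set.mem_insert_iff, Set.mem_singleton_iff] at hs
    rcases hs with rfl | rfl
    · simp only [map_sub, map_mul, aeval_X, aeval_C, MvPolynomial.algebraMap_eq,
        Matrix.cons_val_zero, Matrix.cons_val_one, Matrix.head_cons]
      linear_combination (-(X 0 : MvPolynomial (Fin 3) k)) * hC1
    · simp only [map_sub, map_mul, aeval_X, aeval_C, MvPolynomial.algebraMap_eq,
        Matrix.cons_val_zero, Matrix.cons_val_one, Matrix.head_cons, Matrix.cons_val_two,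
        Matrix.tail_cons]
      linear_combination (-(X 0 : MvPolynomial (Fin 3) k)) * hC2
  · intro i
    fin_cases i
    · simp
    · have hm : (X 1 : MvPolynomial (Fin 3) k) - C ε1 * X 0
          = (-C ε1) * (X 0 - C ε1 * X 1) := by
        linear_combination (-(X 1 : MvPolynomial (Fin 3) k)) * hC1
      simpa [hm] using Ideal.mul_mem_left _ (-C ε1)
        (Ideal.subset_span (s := {X 0 - C ε1 * X 1, X 0 - C ε2 * X 2})
          (Set.mem_insert _ _))
    · have hm : (X 2 : MvPolynomial (Fin 3) k) - C ε2 * X 0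
          = (-C ε2) * (X 0 - C ε2 * X 2) := by
        linear_combination (-(X 2 : MvPolynomial (Fin 3) k)) * hC2
      simpa [hm] using Ideal.mul_mem_left _ (-C ε2)
        (Ideal.subset_span (s := {X 0 - C ε1 * X 1, X 0 - C ε2 * X 2})
          (Set.mem_insert_of_mem _ rfl))

lemma isPrime_originIdeal :
    (Ideal.span {X 0, X 1, X 2} : Ideal (MvPolynomial (Fin 3) k)).IsPrime := by
  rw [span_eq_ker_aux _ (fun _ => 0) ?_ ?_]
  · exact RingHom.ker_isPrime _
  · intro s hs
    simp only [Set.mem_insert_iff, Set.mem_singleton_iff] at hs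
    rcases hs with rfl | rfl | rfl <;> simp
  · intro i
    fin_cases i <;>
      · simp only [sub_zero]
        exact Ideal.subset_span (by simp)

lemma relations_le_lineIdeal (ε1 ε2 : k) (h1 : ε1 ^ 2 = 1) (h2 : ε2 ^ 2 = 1) :
    (Ideal.span {(X 0 : MvPolynomial (Fin 3) k) ^ 2 - X 1 ^ 2,
        (X 0 : MvPolynomial (Fin 3) k) ^ 2 - X 2 ^ 2})
      ≤ Ideal.span {X 0 - C ε1 * X 1, X 0 - C ε2 * X 2} := by
  have hC1 : (C ε1 : MvPolynomial (Fin 3) k) ^ 2 = 1 := by rw [← map_pow, h1, map_one]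
  have hC2 : (C ε2 : MvPolynomial (Fin 3) k) ^ 2 = 1 := by rw [← map_pow, h2, map_one]
  rw [Ideal.span_le]
  intro s hs
  simp only [Set.mem_insert_iff, Set.mem_singleton_iff] at hs
  rcases hs with rfl | rfl
  · have hm : (X 0 : MvPolynomial (Fin 3) k) ^ 2 - X 1 ^ 2
        = (X 0 + C ε1 * X 1) * (X 0 - C ε1 * X 1) := by
      linear_combination ((X 1 : MvPolynomial (Fin 3) k) ^ 2) * hC1
    rw [hm]
    exact Ideal.mul_mem_left _ _ (Ideal.subset_span (Set.mem_insert _ _))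
  · have hm : (X 0 : MvPolynomial (Fin 3) k) ^ 2 - X 2 ^ 2
        = (X 0 + C ε2 * X 2) * (X 0 - C ε2 * X 2) := by
      linear_combination ((X 2 : MvPolynomial (Fin 3) k) ^ 2) * hC2
    rw [hm]
    exact Ideal.mul_mem_left _ _ (Ideal.subset_span (Set.mem_insert_of_mem _ rfl))

lemma relations_le_originIdeal :
    (Ideal.span {(X 0 : MvPolynomial (Fin 3) k) ^ 2 - X 1 ^ 2,
        (X 0 : MvPolynomial (Fin 3) k) ^ 2 - X 2 ^ 2})
      ≤ Ideal.span {X 0, X 1, X 2} := by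
  rw [Ideal.span_le]
  intro s hs
  simp only [Set.mem_insert_iff, Set.mem_singleton_iff] at hs
  have h0 : (X 0 : MvPolynomial (Fin 3) k) ∈ Ideal.span {X 0, X 1, X 2} :=
    Ideal.subset_span (by simp)
  have hx1 : (X 1 : MvPolynomial (Fin 3) k) ∈ Ideal.span {X 0, X 1, X 2} :=
    Ideal.subset_span (by simp)
  have hx2 : (X 2 : MvPolynomial (Fin 3) k) ∈ Ideal.span {X 0, X 1, X 2} :=
    Ideal.subset_span (by simp)
  rcases hs with rfl | rfl
  · exact sub_mem (by simpa [sq] using Ideal.mul_mem_left _ (X 0) h0)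
      (by simpa [sq] using Ideal.mul_mem_left _ (X 1) hx1)
  · exact sub_mem (by simpa [sq] using Ideal.mul_mem_left _ (X 0) h0)
      (by simpa [sq] using Ideal.mul_mem_left _ (X 2) hx2)

lemma lineIdeal_le_originIdeal (ε1 ε2 : k) :
    (Ideal.span {X 0 - C ε1 * X 1, X 0 - C ε2 * X 2} : Ideal (MvPolynomial (Fin 3) k))
      ≤ Ideal.span {X 0, X 1, X 2} := by
  rw [Ideal.span_le]
  intro s hs
  simp only [Set.mem_insert_iff, Set.mem_singleton_iff] at hs
  have h0 : (X 0 : MvPolynomial (Fin 3) k) ∈ Ideal.span {X 0, X 1, X 2} :=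
    Ideal.subset_span (by simp)
  have hx1 : (X 1 : MvPolynomial (Fin 3) k) ∈ Ideal.span {X 0, X 1, X 2} :=
    Ideal.subset_span (by simp)
  have hx2 : (X 2 : MvPolynomial (Fin 3) k) ∈ Ideal.span {X 0, X 1, X 2} :=
    Ideal.subset_span (by simp)
  rcases hs with rfl | rfl
  · exact sub_mem h0 (Ideal.mul_mem_left _ _ hx1)
  · exact sub_mem h0 (Ideal.mul_mem_left _ _ hx2)

end Aux

/-- Let `k` be a field of characteristic different from `2`.  Then the prime
spectrum of `k[x,y,z]/(x² − y², x² − z²)` is a connected topological space. -/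
theorem connectedSpace_primeSpectrum_four_lines
    (k : Type u) [Field k] (hk : ringChar k ≠ 2) :
    ConnectedSpace (PrimeSpectrum
      (MvPolynomial (Fin 3) k ⧸
        Ideal.span {(X 0 : MvPolynomial (Fin 3) k) ^ 2 - X 1 ^ 2,
          (X 0 : MvPolynomial (Fin 3) k) ^ 2 - X 2 ^ 2})) := by
  set I : Ideal (MvPolynomial (Fin 3) k) :=
    Ideal.span {(X 0 : MvPolynomial (Fin 3) k) ^ 2 - X 1 ^ 2,
      (X 0 : MvPolynomial (Fin 3) k) ^ 2 - X 2 ^ 2} with hI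
  let R := MvPolynomial (Fin 3) k ⧸ I
  let mk : MvPolynomial (Fin 3) k →+* R := Ideal.Quotient.mk I
  have hker : RingHom.ker mk = I := Ideal.mk_ker
  -- the four line ideals in the quotient
  have hεsq : ∀ ε ∈ ({1, -1} : Set k), ε ^ 2 = 1 := by
    rintro ε hε
    rcases hε with rfl | rfl <;> ring
  have hone : (1 : k) ^ 2 = 1 := by ring
  have hneg : (-1 : k) ^ 2 = 1 := by ring
  -- primes in the quotient corresponding to the four lines
  have linePrime : ∀ ε1 ε2 : k, ε1 ^ 2 = 1 → ε2 ^ 2 = 1 →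
      (Ideal.map mk (Ideal.span {X 0 - C ε1 * X 1, X 0 - C ε2 * X 2})).IsPrime := by
    intro ε1 ε2 h1 h2
    haveI := isPrime_lineIdeal ε1 ε2 h1 h2
    exact Ideal.map_isPrime_of_surjective Ideal.Quotient.mk_surjective
      (by rw [hker]; exact relations_le_lineIdeal ε1 ε2 h1 h2)
  -- the origin
  haveI : (Ideal.span {X 0, X 1, X 2} : Ideal (MvPolynomial (Fin 3) k)).IsPrime :=
    isPrime_originIdeal
  have originPrime : (Ideal.map mk (Ideal.span {X 0, X 1, X 2})).IsPrime :=
    Ideal.map_isPrime_of_surjective Ideal.Quotient.mk_surjective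
      (by rw [hker]; exact relations_le_originIdeal)
  let pt : PrimeSpectrum R := ⟨Ideal.map mk (Ideal.span {X 0, X 1, X 2}), originPrime⟩
  -- each line's zero locus
  let Z : k → k → Set (PrimeSpectrum R) := fun ε1 ε2 =>
    PrimeSpectrum.zeroLocus
      ((Ideal.map mk (Ideal.span {X 0 - C ε1 * X 1, X 0 - C ε2 * X 2}) : Ideal R) : Set R)
  have hZpre : ∀ ε1 ε2 : k, ε1 ^ 2 = 1 → ε2 ^ 2 = 1 → IsPreconnected (Z ε1 ε2) := by
    intro ε1 ε2 h1 h2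
    have hp := linePrime ε1 ε2 h1 h2
    have : Z ε1 ε2 = closure {(⟨_, hp⟩ : PrimeSpectrum R)} :=
      (PrimeSpectrum.closure_singleton (⟨_, hp⟩ : PrimeSpectrum R)).symm
    rw [this]
    exact (isIrreducible_singleton.closure).2.isPreconnected
  have hptZ : ∀ ε1 ε2 : k, pt ∈ Z ε1 ε2 := by
    intro ε1 ε2
    have hle : Ideal.map mk (Ideal.span {X 0 - C ε1 * X 1, X 0 - C ε2 * X 2})
        ≤ pt.asIdeal := Ideal.map_mono (lineIdeal_le_originIdeal ε1 ε2)
    exact (PrimeSpectrum.mem_zeroLocus _ _).mpr hle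
  -- the covering
  have hmemZ : ∀ (ε1 ε2 : k) (P : PrimeSpectrum R),
      mk (X 0 - C ε1 * X 1) ∈ P.asIdeal → mk (X 0 - C ε2 * X 2) ∈ P.asIdeal →
      P ∈ Z ε1 ε2 := by
    intro ε1 ε2 P ha hb
    have hle : Ideal.map mk (Ideal.span {X 0 - C ε1 * X 1, X 0 - C ε2 * X 2})
        ≤ P.asIdeal := by
      rw [Ideal.map_le_iff_le_comap, Ideal.span_le]
      intro s hs
      simp only [Set.mem_insert_iff, Set.mem_singleton_iff] at hs
      rcases hs with rfl | rfl
      · exact ha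
      · exact hb
    exact (PrimeSpectrum.mem_zeroLocus _ _).mpr hle
  have hxy : ∀ P : PrimeSpectrum R,
      mk (X 0 - C (1:k) * X 1) ∈ P.asIdeal ∨ mk (X 0 - C (-1:k) * X 1) ∈ P.asIdeal := by
    intro P
    have h0 : mk ((X 0 - C (1:k) * X 1) * (X 0 - C (-1:k) * X 1)) = 0 := by
      rw [Ideal.Quotient.eq_zero_iff_mem]
      have : (X 0 - C (1:k) * X 1) * (X 0 - C (-1:k) * X 1)
          = (X 0 : MvPolynomial (Fin 3) k) ^ 2 - X 1 ^ 2 := by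
        simp only [map_one, map_neg, one_mul, neg_mul, sub_neg_eq_add]
        ring
      rw [this, hI]
      exact Ideal.subset_span (Set.mem_insert _ _)
    exact P.2.mem_or_mem (by rw [← map_mul, h0]; exact zero_mem _)
  have hxz : ∀ P : PrimeSpectrum R,
      mk (X 0 - C (1:k) * X 2) ∈ P.asIdeal ∨ mk (X 0 - C (-1:k) * X 2) ∈ P.asIdeal := by
    intro P
    have h0 : mk ((X 0 - C (1:k) * X 2) * (X 0 - C (-1:k) * X 2)) = 0 := by
      rw [Ideal.Quotient.eq_zero_iff_mem]
      have : (X 0 - C (1:k) * X 2) * (X 0 - C (-1:k) * X 2)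
          = (X 0 : MvPolynomial (Fin 3) k) ^ 2 - X 2 ^ 2 := by
        simp only [map_one, map_neg, one_mul, neg_mul, sub_neg_eq_add]
        ring
      rw [this, hI]
      exact Ideal.subset_span (Set.mem_insert_of_mem _ rfl)
    exact P.2.mem_or_mem (by rw [← map_mul, h0]; exact zero_mem _)
  -- the four-set family
  let c : Set (Set (PrimeSpectrum R)) := {Z 1 1, Z 1 (-1), Z (-1) 1, Z (-1) (-1)}
  have hcover : (Set.univ : Set (PrimeSpectrum R)) = ⋃₀ c := by
    apply Set.eq_of_subset_of_subset
    · intro P _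
      rcases hxy P with h1 | h1 <;> rcases hxz P with h2 | h2
      · exact ⟨Z 1 1, by simp [c], hmemZ _ _ P h1 h2⟩
      · exact ⟨Z 1 (-1), by simp [c], hmemZ _ _ P h1 h2⟩
      · exact ⟨Z (-1) 1, by simp [c], hmemZ _ _ P h1 h2⟩
      · exact ⟨Z (-1) (-1), by simp [c], hmemZ _ _ P h1 h2⟩
    · exact Set.subset_univ _
  have hpre : IsPreconnected (Set.univ : Set (PrimeSpectrum R)) := by
    rw [hcover]
    apply isPreconnected_sUnion pt c
    · intro s hs
      rcases hs with rfl | rfl | rfl | rfl <;> exact hptZ _ _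
    · intro s hs
      rcases hs with rfl | rfl | rfl | rfl
      · exact hZpre _ _ hone hone
      · exact hZpre _ _ hone hneg
      · exact hZpre _ _ hneg hone
      · exact hZpre _ _ hneg hneg
  exact connectedSpace_iff_univ.mpr ⟨⟨pt, trivial⟩, hpre⟩
end

section
/- Let k be a field of characteristic different from 2, let R = k[x,y]/(x² − y²), and let g : Spec R → Spec k[T] be the morphism of schemes induced by the k-algebra homomorphism k[T] → R sending T to the class of x. Then g is not topologically unramified: the diagonal morphism Spec R → Spec R ×_{Spec k[T]} Spec R is not an open map on underlying topological spaces. -/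
/-!
For an `R`-algebra `S`, the diagonal of `Spec S ⟶ Spec R` is `Spec` of the multiplication
`μ : S ⊗[R] S → S`, whose image is the closed set `V(ker μ)`. If it were also open, it would be
stable under generization. The lines `y = x` and `y = -x` give two `k[T]`-points
`E₁, E₂ : R → k[T]`, hence a prime `P = ker (E₁ ⊗ E₂)` of `R ⊗ R`; it misses
`y ⊗ 1 - 1 ⊗ y ∈ ker μ`, which goes to `2T`, yet it specializes to the point where both
lines meet at the origin, and that point lies on the diagonal.
-/

universe u

open AlgebraicGeometry CategoryTheory CategoryTheory.Limits MvPolynomial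

theorem PrimeSpectrum.ker_le_of_isOpenMap_comap {A B : Type*} [CommRing A] [CommRing B]
    {f : A →+* B} (hf : Function.Surjective f) (hopen : IsOpenMap (PrimeSpectrum.comap f))
    {p q : PrimeSpectrum A} (hpq : p ≤ q) (hq : RingHom.ker f ≤ q.asIdeal) :
    RingHom.ker f ≤ p.asIdeal := by
  have hrange : IsOpen (PrimeSpectrum.zeroLocus (RingHom.ker f : Set A)) := by
    rw [← range_comap_of_surjective _ _ hf]
    exact hopen.isOpen_range
  exact hrange.stableUnderGeneralization ((PrimeSpectrum.le_iff_specializes p q).mp hpq) hq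

open TensorProduct in
theorem TopologicallyUnramified.isOpenMap_comap_lmul' {R S : Type u} [CommRing R] [CommRing S]
    [Algebra R S] (h : TopologicallyUnramified (Spec.map (CommRingCat.ofHom (algebraMap R S)))) :
    IsOpenMap (PrimeSpectrum.comap
      (Algebra.TensorProduct.lmul' R : S ⊗[R] S →ₐ[R] S).toRingHom) := by
  rw [TopologicallyUnramified, diagonal_SpecMap] at h
  have := (pullbackSpecIso R S S).hom.isOpenEmbedding.isOpenMap.comp h
  simp only [Function.comp_def, ← Scheme.Hom.comp_apply, Category.assoc, Iso.inv_hom_id,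
    Category.comp_id] at this
  exact this

section SpecializingPoints

open TensorProduct Algebra.TensorProduct

variable {R S D K : Type*} [CommRing R] [CommRing S] [Algebra R S] [CommRing D] [Algebra R D]
  [CommRing K] (E₁ E₂ : S →ₐ[R] D) (ψ : D →+* K)

theorem map_productMap_eq_map_lmul' (hψ : ∀ s, ψ (E₁ s) = ψ (E₂ s)) (z : S ⊗[R] S) :
    ψ (productMap E₁ E₂ z) = ψ (E₁ (lmul' R z)) := by
  induction z using TensorProduct.induction_on with
  | zero => simp
  | tmul a b => simp [hψ b]
  | add z w hz hw => simp only [map_add, hz, hw]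

theorem not_isOpenMap_comap_lmul'_of_map_eq [IsDomain D] [IsDomain K]
    (hψ : ∀ s, ψ (E₁ s) = ψ (E₂ s)) {s : S} (hs : E₁ s ≠ E₂ s) :
    ¬ IsOpenMap (PrimeSpectrum.comap (lmul' R : S ⊗[R] S →ₐ[R] S).toRingHom) := by
  intro hopen
  let P : PrimeSpectrum (S ⊗[R] S) := ⟨RingHom.ker (productMap E₁ E₂), RingHom.ker_isPrime _⟩
  let M : PrimeSpectrum (S ⊗[R] S) :=
    ⟨RingHom.ker (ψ.comp (productMap E₁ E₂).toRingHom), RingHom.ker_isPrime _⟩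
  have hPM : P ≤ M := fun z (hz : productMap E₁ E₂ z = 0) ↦
    show ψ (productMap E₁ E₂ z) = 0 by rw [hz, map_zero]
  have hM : RingHom.ker (lmul' R : S ⊗[R] S →ₐ[R] S).toRingHom ≤ M.asIdeal :=
    fun z (hz : lmul' R z = 0) ↦
      show ψ (productMap E₁ E₂ z) = 0 by
        rw [map_productMap_eq_map_lmul' E₁ E₂ ψ hψ, hz, map_zero, map_zero]
  have hP := PrimeSpectrum.ker_le_of_isOpenMap_comap
    (fun a ↦ ⟨a ⊗ₜ 1, by simp⟩) hopen hPM hM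
  have hdiff : s ⊗ₜ[R] 1 - 1 ⊗ₜ s ∈ RingHom.ker (lmul' R : S ⊗[R] S →ₐ[R] S).toRingHom := by
    simp
  exact hs (sub_eq_zero.mp (by simpa [P] using hP hdiff))

end SpecializingPoints

theorem Polynomial.X_sq_eq_sq_C_mul_X {k : Type*} [CommRing k] {c : k} (hc : c ^ 2 = 1) :
    (Polynomial.X : Polynomial k) ^ 2 = (Polynomial.C c * Polynomial.X) ^ 2 := by
  rw [mul_pow, ← map_pow, hc, map_one, one_mul]

abbrev TwoLines (k : Type u) [CommRing k] : Type u :=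
  MvPolynomial (Fin 2) k ⧸ Ideal.span {(X 0 : MvPolynomial (Fin 2) k) ^ 2 - X 1 ^ 2}

namespace TwoLines

variable (k : Type u) [CommRing k]

noncomputable def x : TwoLines k := Ideal.Quotient.mk _ (X 0)

noncomputable def y : TwoLines k := Ideal.Quotient.mk _ (X 1)

variable {k}

noncomputable def lift {A : Type*} [CommRing A] [Algebra k A] (a b : A) (hab : a ^ 2 = b ^ 2) :
    TwoLines k →ₐ[k] A :=
  Ideal.Quotient.liftₐ _ (aeval ![a, b]) fun p hp ↦ by
    obtain ⟨q, rfl⟩ := Ideal.mem_span_singleton'.mp hp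
    simp [hab]

@[simp]
theorem lift_x {A : Type*} [CommRing A] [Algebra k A] (a b : A) (hab : a ^ 2 = b ^ 2) :
    lift a b hab (x k) = a :=
  (Ideal.Quotient.lift_mk _ _ _).trans (by simp)

@[simp]
theorem lift_y {A : Type*} [CommRing A] [Algebra k A] (a b : A) (hab : a ^ 2 = b ^ 2) :
    lift a b hab (y k) = b :=
  (Ideal.Quotient.lift_mk _ _ _).trans (by simp)

theorem algHom_ext {A : Type*} [CommRing A] [Algebra k A] {f g : TwoLines k →ₐ[k] A}
    (hx : f (x k) = g (x k)) (hy : f (y k) = g (y k)) : f = g := by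
  refine Ideal.Quotient.algHom_ext _ (MvPolynomial.algHom_ext fun i ↦ ?_)
  fin_cases i
  exacts [hx, hy]

noncomputable instance : Algebra (Polynomial k) (TwoLines k) :=
  (Polynomial.aeval (x k)).toRingHom.toAlgebra

noncomputable def line (c : k) (hc : c ^ 2 = 1) : TwoLines k →ₐ[Polynomial k] Polynomial k where
  __ := lift Polynomial.X (Polynomial.C c * Polynomial.X) (Polynomial.X_sq_eq_sq_C_mul_X hc)
  commutes' p := by
    change lift _ _ _ (Polynomial.aeval (x k) p) = p
    rw [← Polynomial.aeval_algHom_apply, lift_x, Polynomial.aeval_X_left_apply]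

@[simp]
theorem line_y (c : k) (hc : c ^ 2 = 1) : line c hc (y k) = Polynomial.C c * Polynomial.X := by
  simp [line]

theorem eval_zero_line (c c' : k) (hc : c ^ 2 = 1) (hc' : c' ^ 2 = 1) (s : TwoLines k) :
    (line c hc s).eval 0 = (line c' hc' s).eval 0 := by
  simp only [← Polynomial.coe_aeval_eq_eval]
  change ((Polynomial.aeval 0).comp (lift _ _ (Polynomial.X_sq_eq_sq_C_mul_X hc))) s =
    ((Polynomial.aeval 0).comp (lift _ _ (Polynomial.X_sq_eq_sq_C_mul_X hc'))) s
  congr 1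
  apply algHom_ext <;> simp

end TwoLines

open TwoLines in
/-- Let `k` be a field of characteristic different from `2` and
`R = k[x,y]/(x² − y²)`.  The morphism `Spec R ⟶ Spec k[T]` induced by `T ↦ x` is not
topologically unramified. -/
theorem not_topologicallyUnramified_proj_two_lines
    (k : Type u) [Field k] (hk : ringChar k ≠ 2) :
    ¬ TopologicallyUnramified
        (Spec.map (CommRingCat.ofHom
          (Polynomial.aeval
            ((Ideal.Quotient.mk
                (Ideal.span {(X 0 : MvPolynomial (Fin 2) k) ^ 2 - X 1 ^ 2}))
              (X 0)) :
            Polynomial k →ₐ[k]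
              (MvPolynomial (Fin 2) k ⧸
                Ideal.span {(X 0 : MvPolynomial (Fin 2) k) ^ 2 - X 1 ^ 2})).toRingHom)) := by
  intro h
  have hc : (-1 : k) ^ 2 = 1 := by norm_num
  have hsep : line 1 (one_pow 2) (y k) ≠ line (-1) hc (y k) := by
    rw [line_y, line_y]
    exact fun heq ↦ Ring.neg_one_ne_one_of_char_ne_two hk
      (Polynomial.C_injective (mul_right_cancel₀ Polynomial.X_ne_zero heq)).symm
  exact not_isOpenMap_comap_lmul'_of_map_eq (line 1 (one_pow 2)) (line (-1) hc)
    (Polynomial.evalRingHom 0) (eval_zero_line _ _ _ _) hsep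
    (TopologicallyUnramified.isOpenMap_comap_lmul' (R := Polynomial k) (S := TwoLines k) h)
end

section
/- Morphisms of schemes of finite expansion are stable under base change: if f : Y → X is a morphism of schemes of finite expansion and g : X' → X is any morphism of schemes, then the base change f' : X' ×_X Y → X' is of finite expansion. -/
universe u

open AlgebraicGeometry CategoryTheory CategoryTheory.Limits

/-- A morphism of schemes `f : Y ⟶ X` is of finite expansion if `X` can be covered by open
subschemes `U i` and `Y` can be covered by open subschemes `V j` such that each restriction
`f|_{V j}` factors as `V j ⟶ 𝔸ⁿ_{U i} ⟶ U i ⟶ X` for some `i` and some `n`, where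
`V j ⟶ 𝔸ⁿ_{U i}` is integral and `U i ⟶ X` is the open immersion. -/
def IsFiniteExpansion {Y X : AlgebraicGeometry.Scheme.{u}} (f : Y ⟶ X) : Prop :=
  ∃ (ι : Type u) (U : ι → X.Opens) (κ : Type u) (V : κ → Y.Opens),
    iSup U = ⊤ ∧ iSup V = ⊤ ∧
    ∀ j : κ, ∃ (i : ι) (n : ℕ)
      (t : ((V j : AlgebraicGeometry.Scheme) ⟶ AffineSpace (ULift.{u} (Fin n)) (U i : AlgebraicGeometry.Scheme))),
      IsIntegralHom t ∧
        t ≫ (AffineSpace (ULift.{u} (Fin n)) (U i : AlgebraicGeometry.Scheme) ↘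
            (U i : AlgebraicGeometry.Scheme)) ≫ (U i).ι = (V j).ι ≫ f

def FactorsIntegrallyThroughAffineSpace {Y X : Scheme.{u}} (f : Y ⟶ X) (U : X.Opens)
    (V : Y.Opens) : Prop :=
  ∃ (n : ℕ) (t : (V : Scheme) ⟶ AffineSpace (ULift.{u} (Fin n)) U),
    IsIntegralHom t ∧ t ≫ (AffineSpace (ULift.{u} (Fin n)) U ↘ U) ≫ U.ι = V.ι ≫ f

theorem isFiniteExpansion_iff {Y X : Scheme.{u}} (f : Y ⟶ X) :
    IsFiniteExpansion f ↔ ∃ (ι : Type u) (U : ι → X.Opens) (κ : Type u) (V : κ → Y.Opens),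
      iSup U = ⊤ ∧ iSup V = ⊤ ∧ ∀ j, ∃ i, FactorsIntegrallyThroughAffineSpace f (U i) (V j) :=
  Iff.rfl

/-- Restricting the square `h` to `g' ⁻¹ᵁ V ⟶ V` and `𝔸ⁿ_{g ⁻¹ᵁ U} ⟶ 𝔸ⁿ_U` exhibits the new
factorization `g' ⁻¹ᵁ V ⟶ 𝔸ⁿ_{g ⁻¹ᵁ U}` as a base change of the old one, hence integral. -/
theorem FactorsIntegrallyThroughAffineSpace.of_isPullback {Y X X' Y' : Scheme.{u}}
    {f : Y ⟶ X} {g : X' ⟶ X} {f' : Y' ⟶ X'} {g' : Y' ⟶ Y} (h : IsPullback f' g' g f)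
    {U : X.Opens} {V : Y.Opens} (hf : FactorsIntegrallyThroughAffineSpace f U V) :
    FactorsIntegrallyThroughAffineSpace f' (g ⁻¹ᵁ U) (g' ⁻¹ᵁ V) := by
  obtain ⟨n, t, ht, hcomm⟩ := hf
  have hV : IsPullback (g' ∣_ V) ((g' ⁻¹ᵁ V).ι ≫ f') (V.ι ≫ f) g :=
    (isPullback_morphismRestrict g' V).paste_vert h.flip
  have hU := (AffineSpace.isPullback_map (n := ULift.{u} (Fin n)) (g ∣_ U)).paste_vert
    (isPullback_morphismRestrict g U)
  have w : ((g' ∣_ V) ≫ t) ≫ (AffineSpace _ U ↘ U) ≫ U.ι = ((g' ⁻¹ᵁ V).ι ≫ f') ≫ g := by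
    rw [Category.assoc, hcomm, hV.w]
  have ht' : IsPullback (g' ∣_ V) (hU.lift _ _ w) t (AffineSpace.map _ (g ∣_ U)) :=
    .of_bot (by rwa [hU.lift_snd, hcomm]) (hU.lift_fst _ _ _).symm hU
  exact ⟨n, _, MorphismProperty.of_isPullback ht' ht, hU.lift_snd _ _ w⟩

/-- Morphisms of schemes of finite expansion are stable under base change:
if `f : Y ⟶ X` is of finite expansion and `g : X' ⟶ X` is any morphism, then the base change
`X' ×ₓ Y ⟶ X'` is of finite expansion. -/
theorem IsFiniteExpansion.baseChange {Y X X' : AlgebraicGeometry.Scheme.{u}}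
    (f : Y ⟶ X) (g : X' ⟶ X) (hf : IsFiniteExpansion f) :
    IsFiniteExpansion (pullback.fst g f) := by
  rw [isFiniteExpansion_iff] at hf ⊢
  obtain ⟨ι, U, κ, V, hU, hV, hUV⟩ := hf
  exact ⟨ι, fun i => g ⁻¹ᵁ U i, κ, fun j => pullback.snd g f ⁻¹ᵁ V j,
    g.iSup_preimage_eq_top hU, (pullback.snd g f).iSup_preimage_eq_top hV,
    fun j => (hUV j).imp fun _ =>
      FactorsIntegrallyThroughAffineSpace.of_isPullback (.of_hasPullback g f)⟩
end
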